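/- Trace-norm bound via the Hilbert projective metric: if ρ and σ are positive semidefinite operators with equal support and tr(ρ) = tr(σ), then ‖ρ − σ‖₁ ≤ tr(σ)·min(2^{D_Ω(ρ,σ)} − 1, 2). -/

import Mathlib

open scoped Matrix ComplexOrder

/-- `D_max(ρ,σ) = log₂ inf {λ > 0 : ρ ≤ λσ}` (Loewner order). -/
noncomputable def Dmax {n : Type*} [Fintype n] (ρ σ : Matrix n n ℂ) : ℝ :=
  Real.logb 2 (sInf {l : ℝ | 0 < l ∧ (l • σ - ρ).PosSemidef})

/-- Hilbert projective metric `D_Ω(ρ,σ) = D_max(ρ,σ) + D_max(σ,ρ)`. -/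
noncomputable def DOmega {n : Type*} [Fintype n] (ρ σ : Matrix n n ℂ) : ℝ :=
  Dmax ρ σ + Dmax σ ρ

/-- Trace norm of a Hermitian matrix via the functional calculus: `‖A‖₁ = tr|A|`. -/
noncomputable def traceNorm {n : Type*} [Fintype n] [DecidableEq n] (A : Matrix n n ℂ) : ℝ :=
  (Matrix.trace (cfc (fun x : ℝ => |x|) A)).re

/-- Equal supports: the kernels coincide. -/
def SameSupport {n : Type*} [Fintype n] (ρ σ : Matrix n n ℂ) : Prop :=
  ∀ v : n → ℂ, ρ.mulVec v = 0 ↔ σ.mulVec v = 0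

/-! Write `M = 2 ^ D_max(ρ,σ)` and `μ = 2 ^ D_max(σ,ρ)`. Since `ker σ ⊆ ker ρ`, one can write
`ρ = √σ X √σ` with `X` self-adjoint, so `ρ ≤ ‖X‖ σ`: the set defining `D_max` is nonempty, and as
the positive semidefinite cone is closed its infimum `M` satisfies `ρ ≤ M σ`. Comparing traces gives
`M ≥ 1`. Likewise `σ ≤ μ ρ` with `μ ≥ 1`.

For a traceless Hermitian `A` and `0 ≤ C` with `A ≤ C`, `‖A‖₁ = 2 tr A⁺ ≤ 2 tr C`, as one sees on
the diagonal in an eigenbasis of `A`. Taking `A = ρ - σ` with `C = (M - 1) σ` or `C = ρ`, and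
`A = σ - ρ` with `C = (μ - 1) ρ`, gives `‖ρ - σ‖₁ ≤ 2 tr σ · min (M - 1, μ - 1, 1)`, and
`2 min (M - 1, μ - 1) ≤ (M - 1) + (μ - 1) ≤ M μ - 1`. -/

open scoped MatrixOrder
open Matrix

namespace Matrix

variable {n 𝕜 : Type*} [Fintype n] [RCLike 𝕜]

theorem isClosed_setOf_posSemidef : IsClosed {A : Matrix n n 𝕜 | A.PosSemidef} := by
  have hset : {A : Matrix n n 𝕜 | A.PosSemidef} =
      {A | Aᴴ = A} ∩ ⋂ x : n → 𝕜, {A | 0 ≤ star x ⬝ᵥ (A *ᵥ x)} := by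
    ext A
    simp [posSemidef_iff_dotProduct_mulVec, IsHermitian]
  rw [hset]
  exact (isClosed_eq continuous_id.matrix_conjTranspose continuous_id).inter
    (isClosed_iInter fun x => isClosed_le continuous_const (by fun_prop))

theorem one_le_of_le_smul_of_trace_eq {ρ σ : Matrix n n 𝕜} {l : ℝ} (h : ρ ≤ l • σ)
    (htr : ρ.trace = σ.trace) (htr0 : 0 < σ.trace) : 1 ≤ l := by
  have h0 := (show (l • σ - ρ).PosSemidef from h).trace_nonneg
  rw [trace_sub, trace_smul, htr, RCLike.real_smul_eq_coe_mul, sub_nonneg] at h0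
  have hre := (RCLike.le_iff_re_im.mp h0).1
  rw [RCLike.re_ofReal_mul] at hre
  exact one_le_of_le_mul_right₀ (RCLike.pos_iff.mp htr0).1 hre

variable [DecidableEq n]

theorem continuousOn_spectrum_real (f : ℝ → ℝ) (A : Matrix n n 𝕜) :
    ContinuousOn f (spectrum ℝ A) :=
  (Set.toFinite _).continuousOn f

theorem IsHermitian.mul_cfc_mul_inv_self {s : Matrix n n 𝕜} (hs : s.IsHermitian) :
    s * cfc (fun x : ℝ => x * x⁻¹) s = s := by
  have := cfc_mul id (fun x : ℝ => x * x⁻¹) s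
    (continuousOn_spectrum_real _ _) (continuousOn_spectrum_real _ _)
  rw [cfc_id ℝ s hs.isSelfAdjoint] at this
  rw [← this]
  exact (cfc_congr fun x _ => (mul_assoc x x x⁻¹).symm.trans (mul_self_mul_inv x)).trans
    (cfc_id ℝ s hs.isSelfAdjoint)

theorem PosSemidef.exists_eq_sqrt_mul_mul_sqrt {ρ σ : Matrix n n 𝕜} (hρ : ρ.PosSemidef)
    (hσ : σ.PosSemidef) (hker : ∀ v, σ *ᵥ v = 0 → ρ *ᵥ v = 0) :
    ∃ X : Matrix n n 𝕜, IsSelfAdjoint X ∧ ρ = CFC.sqrt σ * X * CFC.sqrt σ := by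
  set s := CFC.sqrt σ
  -- `t` is the pseudo-inverse of `s` (as `0⁻¹ = 0`), and `Q` the projection onto the range of `σ`.
  set t := cfc (·⁻¹ : ℝ → ℝ) s
  set Q := cfc (fun x : ℝ => x * x⁻¹) s
  have hs : s.IsHermitian := (CFC.sqrt_nonneg σ).isSelfAdjoint
  have ht : IsSelfAdjoint t := cfc_predicate _ s
  have hQ : IsSelfAdjoint Q := cfc_predicate _ s
  have hss : s * s = σ := CFC.sqrt_mul_sqrt_self σ hσ.nonneg
  have hst : s * t = Q := by
    have := cfc_mul id (·⁻¹ : ℝ → ℝ) s (continuousOn_spectrum_real _ _)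
      (continuousOn_spectrum_real _ _)
    rw [cfc_id ℝ s] at this
    exact this.symm
  have hts : t * s = Q := by
    have := cfc_mul (·⁻¹ : ℝ → ℝ) id s (continuousOn_spectrum_real _ _)
      (continuousOn_spectrum_real _ _)
    rw [cfc_id ℝ s] at this
    exact this.symm.trans (cfc_congr fun x _ => mul_comm _ _)
  have hsQ : s * Q = s := hs.mul_cfc_mul_inv_self
  -- `σ (1 - Q) = 0`, so `1 - Q` maps into `ker σ ⊆ ker ρ`.
  have hρQ : ρ * Q = ρ := by
    refine (sub_eq_zero.mp ?_).symm
    rw [← mul_one_sub]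
    refine ext_of_mulVec_single fun i => ?_
    rw [zero_mulVec, ← mulVec_mulVec]
    refine hker _ ?_
    rw [mulVec_mulVec, ← hss, Matrix.mul_assoc, mul_one_sub, hsQ, sub_self, Matrix.mul_zero,
      zero_mulVec]
  have hQρ : Q * ρ = ρ := by
    simpa [hQ.star_eq, hρ.isHermitian.isSelfAdjoint.star_eq] using congrArg star hρQ
  refine ⟨t * ρ * t, by simpa only [ht.star_eq] using hρ.isHermitian.isSelfAdjoint.conjugate t, ?_⟩
  calc ρ = Q * ρ * Q := by rw [hQρ, hρQ]
    _ = (s * t) * ρ * (t * s) := by rw [hst, hts]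
    _ = s * (t * ρ * t) * s := by simp only [Matrix.mul_assoc]

theorem PosSemidef.exists_le_smul_of_ker_le {ρ σ : Matrix n n 𝕜} (hρ : ρ.PosSemidef)
    (hσ : σ.PosSemidef) (hker : ∀ v, σ *ᵥ v = 0 → ρ *ᵥ v = 0) :
    ∃ l : ℝ, 0 < l ∧ ρ ≤ l • σ := by
  obtain ⟨X, hX, hρX⟩ := hρ.exists_eq_sqrt_mul_mul_sqrt hσ hker
  obtain ⟨r, hr⟩ := (Set.toFinite (spectrum ℝ X)).bddAbove
  have hXr : X ≤ algebraMap ℝ _ (max r 1) :=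
    le_algebraMap_of_spectrum_le (fun x hx => (hr hx).trans (le_max_left r 1)) hX
  refine ⟨max r 1, by positivity, ?_⟩
  calc ρ = CFC.sqrt σ * X * CFC.sqrt σ := hρX
    _ ≤ CFC.sqrt σ * algebraMap ℝ _ (max r 1) * CFC.sqrt σ :=
      conjugate_le_conjugate_of_nonneg hXr (CFC.sqrt_nonneg σ)
    _ = max r 1 • σ := by
      rw [Algebra.algebraMap_eq_smul_one, Matrix.mul_smul, Matrix.mul_one, Matrix.smul_mul,
        CFC.sqrt_mul_sqrt_self σ hσ.nonneg]

theorem trace_conjStarAlgAut (U : unitary (Matrix n n 𝕜)) (A : Matrix n n 𝕜) :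
    (Unitary.conjStarAlgAut 𝕜 _ U A).trace = A.trace := by
  rw [Unitary.conjStarAlgAut_apply, trace_mul_cycle, Unitary.coe_star_mul_self, Matrix.one_mul]

theorem sum_posPart_le_re_trace {d : n → ℝ} {B : Matrix n n 𝕜} (hB : B.PosSemidef)
    (hdB : diagonal (fun i => (d i : 𝕜)) ≤ B) : ∑ i, (d i)⁺ ≤ RCLike.re B.trace := by
  rw [trace, map_sum]
  refine Finset.sum_le_sum fun i _ => ?_
  have hdi := (show (B - diagonal _).PosSemidef from hdB).diag_nonneg (i := i)
  rw [sub_apply, diagonal_apply_eq, sub_nonneg] at hdi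
  rw [diag_apply, posPart_def]
  exact sup_le (by simpa using (RCLike.le_iff_re_im.mp hdi).1)
    (RCLike.nonneg_iff.mp hB.diag_nonneg).1

theorem IsHermitian.sum_posPart_eigenvalues_le {A C : Matrix n n 𝕜} (hA : A.IsHermitian)
    (hC : C.PosSemidef) (hAC : A ≤ C) : ∑ i, (hA.eigenvalues i)⁺ ≤ RCLike.re C.trace := by
  have hdiag := hA.conjStarAlgAut_star_eigenvectorUnitary
  rw [Unitary.conjStarAlgAut_star_apply] at hdiag
  have := sum_posPart_le_re_trace (d := hA.eigenvalues)
    (nonneg_iff_posSemidef.mp (star_left_conjugate_nonneg hC.nonneg _))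
    (hdiag ▸ star_left_conjugate_le_conjugate hAC (hA.eigenvectorUnitary : Matrix n n 𝕜))
  rwa [← Unitary.conjStarAlgAut_star_apply (S := 𝕜), trace_conjStarAlgAut] at this

end Matrix

section

variable {n : Type*} [Fintype n] [DecidableEq n]

theorem Matrix.IsHermitian.traceNorm_eq_sum_abs_eigenvalues {A : Matrix n n ℂ}
    (hA : A.IsHermitian) : traceNorm A = ∑ i, |hA.eigenvalues i| := by
  rw [traceNorm, hA.cfc_eq, IsHermitian.cfc, trace_conjStarAlgAut, trace_diagonal]
  simp

theorem traceNorm_neg (A : Matrix n n ℂ) : traceNorm (-A) = traceNorm A := by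
  by_cases hA : IsSelfAdjoint A
  · rw [traceNorm, traceNorm, ← cfc_comp_neg _ A]
    simp only [abs_neg]
  · rw [traceNorm, traceNorm, cfc_apply_of_not_predicate A hA,
      cfc_apply_of_not_predicate (-A) (fun h => hA (by simpa using h.neg))]

theorem traceNorm_sub_comm (A B : Matrix n n ℂ) : traceNorm (A - B) = traceNorm (B - A) := by
  rw [← traceNorm_neg, neg_sub]

theorem Matrix.IsHermitian.traceNorm_le_two_mul_re_trace {A C : Matrix n n ℂ}
    (hA : A.IsHermitian) (htrA : A.trace = 0) (hC : C.PosSemidef) (hAC : A ≤ C) :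
    traceNorm A ≤ 2 * C.trace.re := by
  have hsum : ∑ i, hA.eigenvalues i = 0 := by
    simpa [htrA] using (congrArg Complex.re hA.trace_eq_sum_eigenvalues).symm
  have habs : ∀ x : ℝ, |x| = 2 * x⁺ - x := fun x => by
    rw [← posPart_add_negPart]; linarith [posPart_sub_negPart x]
  rw [hA.traceNorm_eq_sum_abs_eigenvalues]
  simp only [habs, Finset.sum_sub_distrib, ← Finset.mul_sum, hsum, sub_zero]
  linarith [show _ ≤ C.trace.re from hA.sum_posPart_eigenvalues_le hC hAC]

theorem traceNorm_sub_le_of_le_smul {ρ σ : Matrix n n ℂ} {M : ℝ} (hρ : ρ.IsHermitian)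
    (hσ : σ.PosSemidef) (htr : ρ.trace = σ.trace) (hM : 1 ≤ M) (hρσ : ρ ≤ M • σ) :
    traceNorm (ρ - σ) ≤ 2 * (M - 1) * σ.trace.re := by
  have hAC : ρ - σ ≤ (M - 1) • σ := by
    rw [sub_smul, one_smul]
    exact sub_le_sub_right hρσ σ
  have := (hρ.sub hσ.isHermitian).traceNorm_le_two_mul_re_trace
    (by rw [trace_sub, htr, sub_self]) (hσ.smul (sub_nonneg.2 hM)) hAC
  rwa [trace_smul, Complex.real_smul, Complex.re_ofReal_mul, ← mul_assoc] at this

theorem one_le_two_rpow_Dmax_and_le_smul {ρ σ : Matrix n n ℂ} (hρ : ρ.PosSemidef)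
    (hσ : σ.PosSemidef) (hker : ∀ v, σ *ᵥ v = 0 → ρ *ᵥ v = 0) (htr : ρ.trace = σ.trace)
    (htr0 : 0 < σ.trace) :
    1 ≤ (2 : ℝ) ^ Dmax ρ σ ∧ ρ ≤ (2 : ℝ) ^ Dmax ρ σ • σ := by
  set S := {l : ℝ | 0 < l ∧ (l • σ - ρ).PosSemidef}
  obtain ⟨l, hl⟩ := hρ.exists_le_smul_of_ker_le hσ hker
  have hne : S.Nonempty := ⟨l, hl⟩
  have hS1 : ∀ l ∈ S, 1 ≤ l := fun l hl => one_le_of_le_smul_of_trace_eq hl.2 htr htr0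
  have h1 : 1 ≤ sInf S := le_csInf hne hS1
  have hDmax : (2 : ℝ) ^ Dmax ρ σ = sInf S := Real.rpow_logb two_pos (by norm_num) (by linarith)
  have hclosed : IsClosed {l : ℝ | (l • σ - ρ).PosSemidef} :=
    isClosed_setOf_posSemidef.preimage (by fun_prop)
  refine ⟨hDmax ▸ h1, hDmax ▸ ?_⟩
  exact closure_minimal (fun l hl => hl.2) hclosed (csInf_mem_closure hne ⟨1, hS1⟩)

end

/-- trace-norm bound via the Hilbert projective metric:
`‖ρ - σ‖₁ ≤ tr(σ)·min(2^{D_Ω(ρ,σ)} - 1, 2)`. -/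
theorem stmt16 {n : Type*} [Fintype n] [DecidableEq n]
    (ρ σ : Matrix n n ℂ) (hρ : ρ.PosSemidef) (hσ : σ.PosSemidef)
    (hsupp : SameSupport ρ σ) (htr : ρ.trace = σ.trace) (htr0 : 0 < σ.trace) :
    traceNorm (ρ - σ) ≤ (σ.trace).re * min ((2 : ℝ) ^ DOmega ρ σ - 1) 2 := by
  obtain ⟨hM, hρM⟩ :=
    one_le_two_rpow_Dmax_and_le_smul hρ hσ (fun v => (hsupp v).mpr) htr htr0
  obtain ⟨hμ, hσμ⟩ :=
    one_le_two_rpow_Dmax_and_le_smul hσ hρ (fun v => (hsupp v).mp) htr.symm (htr ▸ htr0)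
  have ht : 0 < σ.trace.re := (Complex.pos_iff.mp htr0).1
  have hboundM := traceNorm_sub_le_of_le_smul hρ.isHermitian hσ htr hM hρM
  have hboundμ := traceNorm_sub_le_of_le_smul hσ.isHermitian hρ htr.symm hμ hσμ
  have hbound2 : traceNorm (ρ - σ) ≤ 2 * σ.trace.re := by
    simpa [htr] using (hρ.isHermitian.sub hσ.isHermitian).traceNorm_le_two_mul_re_trace
      (by rw [trace_sub, htr, sub_self]) hρ (sub_le_self ρ hσ.nonneg)
  rw [traceNorm_sub_comm, htr] at hboundμ
  rw [DOmega, Real.rpow_add two_pos, mul_min_of_nonneg _ _ ht.le]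
  refine le_min ?_ (by linarith)
  nlinarith [mul_nonneg (mul_nonneg (sub_nonneg.2 hM) (sub_nonneg.2 hμ)) ht.le]
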